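/- arXiv:0907.3913 — 8 statements merged into one kernel-verified Lean document; each statement's English description precedes it below -/
import Mathlib

section
/- For all n × n complex matrices X and Y, ‖X*Y − Y*X‖₂² + ‖Xᴴ*Y + Y*Xᴴ‖₂² = Tr((Xᴴ*X + X*Xᴴ) * (Yᴴ*Y + Y*Yᴴ)), where Xᴴ denotes the conjugate transpose. -/
/-! Writing both squared norms as traces `Tr(AᴴA)`, the cross terms
`Tr((XY)ᴴ(YX)) + Tr((YX)ᴴ(XY))` occur with opposite signs in the commutator and the
anticommutator and cancel; each of the four remaining terms is a cyclic rotation of one of the four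
terms of `Tr((XᴴX + XXᴴ)(YᴴY + YYᴴ))`. -/

open Matrix BigOperators

/-- Frobenius norm of a complex matrix. -/
noncomputable def frobNorm {n : ℕ} (X : Matrix (Fin n) (Fin n) ℂ) : ℝ :=
  Real.sqrt (∑ i, ∑ j, ‖X i j‖ ^ 2)

namespace Matrix

variable {n R : Type*} [Fintype n] [CommRing R] [StarRing R] (X Y : Matrix n n R)

theorem trace_conjTranspose_mul_self_commutator :
    ((X * Y - Y * X)ᴴ * (X * Y - Y * X)).trace =
      (Xᴴ * X * (Y * Yᴴ)).trace + (X * Xᴴ * (Yᴴ * Y)).trace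
        - (((X * Y)ᴴ * (Y * X)).trace + ((Y * X)ᴴ * (X * Y)).trace) := by
  have h₁ : (Yᴴ * Xᴴ * (X * Y)).trace = (Xᴴ * X * (Y * Yᴴ)).trace := by
    simpa only [Matrix.mul_assoc] using trace_mul_comm Yᴴ (Xᴴ * X * Y)
  have h₂ : (Xᴴ * Yᴴ * (Y * X)).trace = (X * Xᴴ * (Yᴴ * Y)).trace := by
    simpa only [Matrix.mul_assoc] using trace_mul_comm (Xᴴ * Yᴴ * Y) X
  simp only [conjTranspose_sub, conjTranspose_mul, sub_mul, mul_sub, trace_sub, h₁, h₂]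
  abel

theorem trace_conjTranspose_mul_self_anticommutator :
    ((Xᴴ * Y + Y * Xᴴ)ᴴ * (Xᴴ * Y + Y * Xᴴ)).trace =
      (Xᴴ * X * (Yᴴ * Y)).trace + (X * Xᴴ * (Y * Yᴴ)).trace
        + (((X * Y)ᴴ * (Y * X)).trace + ((Y * X)ᴴ * (X * Y)).trace) := by
  have h₁ : (Yᴴ * X * (Xᴴ * Y)).trace = (X * Xᴴ * (Y * Yᴴ)).trace := by
    simpa only [Matrix.mul_assoc] using trace_mul_comm Yᴴ (X * Xᴴ * Y)
  have h₂ : (X * Yᴴ * (Y * Xᴴ)).trace = (Xᴴ * X * (Yᴴ * Y)).trace := by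
    simpa only [Matrix.mul_assoc] using trace_mul_comm (X * Yᴴ * Y) Xᴴ
  have h₃ : (Yᴴ * X * (Y * Xᴴ)).trace = (Xᴴ * Yᴴ * (X * Y)).trace := by
    simpa only [Matrix.mul_assoc] using trace_mul_comm (Yᴴ * X * Y) Xᴴ
  have h₄ : (X * Yᴴ * (Xᴴ * Y)).trace = (Yᴴ * Xᴴ * (Y * X)).trace := by
    simpa only [Matrix.mul_assoc] using trace_mul_comm X (Yᴴ * Xᴴ * Y)
  simp only [conjTranspose_add, conjTranspose_mul, conjTranspose_conjTranspose, add_mul, mul_add,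
    trace_add, h₁, h₂, h₃, h₄]
  abel

theorem trace_commutator_add_anticommutator :
    ((X * Y - Y * X)ᴴ * (X * Y - Y * X)).trace + ((Xᴴ * Y + Y * Xᴴ)ᴴ * (Xᴴ * Y + Y * Xᴴ)).trace =
      ((Xᴴ * X + X * Xᴴ) * (Yᴴ * Y + Y * Yᴴ)).trace := by
  rw [trace_conjTranspose_mul_self_commutator, trace_conjTranspose_mul_self_anticommutator]
  simp only [add_mul, mul_add, trace_add]
  abel

end Matrix

theorem frobNorm_sq_eq_trace {n : ℕ} (M : Matrix (Fin n) (Fin n) ℂ) :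
    ((frobNorm M ^ 2 : ℝ) : ℂ) = (Mᴴ * M).trace := by
  rw [frobNorm, Real.sq_sqrt (by positivity), trace, Finset.sum_comm]
  push_cast
  refine Finset.sum_congr rfl fun i _ => Finset.sum_congr rfl fun j _ => ?_
  simp [Complex.conj_mul']

/-- For all `n × n` complex matrices `X` and `Y`,
`‖XY - YX‖₂² + ‖XᴴY + YXᴴ‖₂² = Tr((XᴴX + XXᴴ)(YᴴY + YYᴴ))`. -/
theorem frob_commutator_identity (n : ℕ) (X Y : Matrix (Fin n) (Fin n) ℂ) :
    ((frobNorm (X * Y - Y * X) ^ 2 + frobNorm (Xᴴ * Y + Y * Xᴴ) ^ 2 : ℝ) : ℂ)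
      = ((Xᴴ * X + X * Xᴴ) * (Yᴴ * Y + Y * Yᴴ)).trace := by
  rw [Complex.ofReal_add, frobNorm_sq_eq_trace, frobNorm_sq_eq_trace,
    trace_commutator_add_anticommutator]
end

section
/- Let X and Y be n × n complex matrices with X ≠ 0, and set ρ = (Xᴴ*X + X*Xᴴ) / (2‖X‖₂²). Then ‖X*Y − Y*X‖₂² ≤ 4‖X‖₂² * ( Tr(ρ*(Yᴴ*Y + Y*Yᴴ))/2 − |Tr(ρ*Y)|² ). -/
/-!
Put `S = XᴴX + XXᴴ`. Expanding and cycling traces gives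
`‖XY - YX‖₂² + ‖XYᴴ + YᴴX‖₂² = Tr(S(YᴴY + YYᴴ))` and `Tr(SY) = ⟨XYᴴ + YᴴX, X⟩` for the
Frobenius inner product `⟨A, B⟩ = Tr(AᴴB)`. Since `ρ = S / (2‖X‖₂²)`, the right-hand side equals
`‖XY - YX‖₂² + ‖XYᴴ + YᴴX‖₂² - |Tr(SY)|² / ‖X‖₂²`, and Cauchy–Schwarz gives
`|Tr(SY)|² ≤ ‖XYᴴ + YᴴX‖₂² ‖X‖₂²`.
-/

open Matrix BigOperators

section Traces

variable {n R : Type*} [Fintype n] [CommRing R] [StarRing R]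

theorem Matrix.trace_conjTranspose_mul_commutator_add_anticommutator (X Y : Matrix n n R) :
    ((X * Y - Y * X)ᴴ * (X * Y - Y * X)).trace + ((X * Yᴴ + Yᴴ * X)ᴴ * (X * Yᴴ + Yᴴ * X)).trace
      = ((Xᴴ * X + X * Xᴴ) * (Yᴴ * Y + Y * Yᴴ)).trace := by
  have rotate (A B C D : Matrix n n R) :
      (A * (B * (C * D))).trace = (B * (C * (D * A))).trace := by
    rw [trace_mul_comm]; simp only [Matrix.mul_assoc]
  simp only [conjTranspose_sub, conjTranspose_add, conjTranspose_mul,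
    conjTranspose_conjTranspose, sub_mul, mul_sub, add_mul, mul_add, trace_sub, trace_add,
    Matrix.mul_assoc]
  simp only [rotate Yᴴ Xᴴ X Y, rotate Yᴴ Xᴴ Y X, rotate Y Xᴴ X Yᴴ, rotate Y Xᴴ Yᴴ X,
    rotate X Xᴴ Yᴴ Y, rotate X Xᴴ Y Yᴴ]
  ring

theorem Matrix.trace_conjTranspose_anticommutator_mul (X Y : Matrix n n R) :
    ((X * Yᴴ + Yᴴ * X)ᴴ * X).trace = ((Xᴴ * X + X * Xᴴ) * Y).trace := by
  simp only [conjTranspose_add, conjTranspose_mul, conjTranspose_conjTranspose, add_mul,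
    trace_add, Matrix.mul_assoc]
  rw [trace_mul_comm Y (Xᴴ * X), trace_mul_comm X (Xᴴ * Y)]
  simp only [Matrix.mul_assoc]

end Traces

theorem Matrix.inner_toLp_vec {m n 𝕜 : Type*} [Fintype m] [Fintype n] [RCLike 𝕜]
    (A B : Matrix m n 𝕜) :
    inner 𝕜 (WithLp.toLp 2 A.vec) (WithLp.toLp 2 B.vec) = (Aᴴ * B).trace := by
  rw [EuclideanSpace.inner_toLp_toLp, dotProduct_comm, star_vec_dotProduct_vec]

section Frobenius

variable {n : ℕ}

theorem frobNorm_eq_norm_toLp_vec (A : Matrix (Fin n) (Fin n) ℂ) :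
    frobNorm A = ‖WithLp.toLp 2 A.vec‖ := by
  rw [EuclideanSpace.norm_eq, frobNorm, Fintype.sum_prod_type, Finset.sum_comm]
  rfl

theorem frobNorm_pos {A : Matrix (Fin n) (Fin n) ℂ} (hA : A ≠ 0) : 0 < frobNorm A := by
  rw [frobNorm_eq_norm_toLp_vec, norm_pos_iff]
  simpa [vec_eq_zero_iff] using hA

theorem ofReal_frobNorm_sq (A : Matrix (Fin n) (Fin n) ℂ) :
    ((frobNorm A ^ 2 : ℝ) : ℂ) = (Aᴴ * A).trace := by
  rw [← inner_toLp_vec, inner_self_eq_norm_sq_to_K, frobNorm_eq_norm_toLp_vec]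
  norm_cast

theorem norm_trace_conjTranspose_mul_le (A B : Matrix (Fin n) (Fin n) ℂ) :
    ‖(Aᴴ * B).trace‖ ≤ frobNorm A * frobNorm B := by
  rw [← inner_toLp_vec, frobNorm_eq_norm_toLp_vec, frobNorm_eq_norm_toLp_vec]
  exact norm_inner_le_norm _ _

end Frobenius

/-- With `ρ = (XᴴX + XXᴴ)/(2‖X‖₂²)`, one has
`‖XY - YX‖₂² ≤ 4‖X‖₂² (Tr(ρ(YᴴY + YYᴴ))/2 - |Tr(ρY)|²)`. -/
theorem frob_commutator_variance_bound (n : ℕ) (X Y : Matrix (Fin n) (Fin n) ℂ)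
    (hX : X ≠ 0)
    (ρ : Matrix (Fin n) (Fin n) ℂ)
    (hρ : ρ = ((2 * frobNorm X ^ 2 : ℝ) : ℂ)⁻¹ • (Xᴴ * X + X * Xᴴ)) :
    frobNorm (X * Y - Y * X) ^ 2
      ≤ 4 * frobNorm X ^ 2 *
        ((ρ * (Yᴴ * Y + Y * Yᴴ)).trace.re / 2 - ‖(ρ * Y).trace‖ ^ 2) := by
  set S := Xᴴ * X + X * Xᴴ
  have trace_ρ_mul (M : Matrix (Fin n) (Fin n) ℂ) :
      (ρ * M).trace = (2 * frobNorm X ^ 2)⁻¹ • (S * M).trace := by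
    rw [hρ, smul_mul, trace_smul, smul_eq_mul, ← Complex.ofReal_inv, ← Complex.real_smul]
  have hgram : frobNorm (X * Y - Y * X) ^ 2 + frobNorm (X * Yᴴ + Yᴴ * X) ^ 2
      = (S * (Yᴴ * Y + Y * Yᴴ)).trace.re := by
    rw [← trace_conjTranspose_mul_commutator_add_anticommutator, ← ofReal_frobNorm_sq,
      ← ofReal_frobNorm_sq, Complex.add_re, Complex.ofReal_re, Complex.ofReal_re]
  have hcauchy : ‖(S * Y).trace‖ ≤ frobNorm (X * Yᴴ + Yᴴ * X) * frobNorm X :=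
    trace_conjTranspose_anticommutator_mul X Y ▸ norm_trace_conjTranspose_mul_le _ _
  have hX_pos := frobNorm_pos hX
  have hscale : 0 ≤ (2 * frobNorm X ^ 2)⁻¹ := by positivity
  rw [trace_ρ_mul, trace_ρ_mul, Complex.smul_re, smul_eq_mul, norm_smul, ← hgram,
    Real.norm_of_nonneg hscale]
  have htrace := norm_nonneg (S * Y).trace
  field_simp
  nlinarith [mul_self_le_mul_self htrace hcauchy]
end

section
/- Let A be a Hermitian n × n complex matrix and let ρ be a density matrix of the same size. Then Tr(ρ*A²) − (Tr(ρ*A))² ≤ ‖A‖₂²/2, where Tr(ρ*A) and Tr(ρ*A²) are real. -/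
open Matrix BigOperators
open scoped ComplexOrder

/-!
In an orthonormal eigenbasis `u` of `A`, the numbers `p i = ⟪u i, ρ u i⟫` form a probability
vector, `Tr(ρA)` and `Tr(ρA²)` are the first two moments of the eigenvalues `λ` under `p`, and
`‖A‖₂² = ∑ λᵢ²`. The claim is thus `∑ pᵢλᵢ² - (∑ pᵢλᵢ)² ≤ ½ ∑ λᵢ²`. Expanding,
`∑ᵢⱼ pᵢpⱼ(λᵢ + λⱼ)² = 2∑ pᵢλᵢ² + 2(∑ pᵢλᵢ)²`, and this nonnegative double sum dominates its
diagonal `4∑ pᵢ²λᵢ²`; hence the variance is at most `∑ 2pᵢ(1 - pᵢ)λᵢ² ≤ ½ ∑ λᵢ²`.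
-/

theorem sum_sum_mul_mul_add_sq {ι : Type*} [Fintype ι] (p x : ι → ℝ) :
    ∑ i, ∑ j, p i * p j * (x i + x j) ^ 2 =
      2 * (∑ i, p i) * ∑ i, p i * x i ^ 2 + 2 * (∑ i, p i * x i) ^ 2 := by
  have h (i j : ι) : p i * p j * (x i + x j) ^ 2 =
      p j * (p i * x i ^ 2) + p i * (p j * x j ^ 2) + 2 * (p i * x i) * (p j * x j) := by ring
  simp only [h, Finset.sum_add_distrib, ← Finset.mul_sum, ← Finset.sum_mul]
  ring

theorem sum_mul_sq_sub_sq_sum_mul_le {ι : Type*} [Fintype ι] {p : ι → ℝ} (hp : ∀ i, 0 ≤ p i)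
    (hp1 : ∑ i, p i = 1) (x : ι → ℝ) :
    ∑ i, p i * x i ^ 2 - (∑ i, p i * x i) ^ 2 ≤ (∑ i, x i ^ 2) / 2 := by
  have hdiag (i : ι) : 4 * (p i * x i) ^ 2 ≤ ∑ j, p i * p j * (x i + x j) ^ 2 := by
    calc 4 * (p i * x i) ^ 2 = p i * p i * (x i + x i) ^ 2 := by ring
      _ ≤ _ := Finset.single_le_sum (f := fun j => p i * p j * (x i + x j) ^ 2)
          (fun j _ => mul_nonneg (mul_nonneg (hp i) (hp j)) (sq_nonneg _)) (Finset.mem_univ i)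
  have hsum := Finset.sum_le_sum (s := Finset.univ) fun i _ => hdiag i
  rw [sum_sum_mul_mul_add_sq, hp1, ← Finset.mul_sum] at hsum
  calc ∑ i, p i * x i ^ 2 - (∑ i, p i * x i) ^ 2
      ≤ ∑ i, (2 * (p i * x i ^ 2) - 2 * (p i * x i) ^ 2) := by
        rw [Finset.sum_sub_distrib, ← Finset.mul_sum, ← Finset.mul_sum]; linarith
    _ ≤ ∑ i, x i ^ 2 / 2 := by
        gcongr with i
        nlinarith [mul_nonneg (sq_nonneg (2 * p i - 1)) (sq_nonneg (x i))]
    _ = (∑ i, x i ^ 2) / 2 := by rw [Finset.sum_div]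

theorem Matrix.trace_mul_mul_diagonal_mul {n R : Type*} [Fintype n] [DecidableEq n] [CommRing R]
    (ρ U V : Matrix n n R) (d : n → R) :
    (ρ * (U * diagonal d * V)).trace = ∑ i, (V * ρ * U) i i * d i := by
  rw [← Matrix.mul_assoc, ← Matrix.mul_assoc, trace_mul_comm, ← Matrix.mul_assoc,
    ← Matrix.mul_assoc]
  simp [trace, mul_diagonal]

theorem Matrix.re_trace_conjTranspose_mul_self {𝕜 m n : Type*} [RCLike 𝕜] [Fintype m] [Fintype n]
    (A : Matrix m n 𝕜) :
    RCLike.re (Aᴴ * A).trace = ∑ i, ∑ j, ‖A i j‖ ^ 2 := by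
  simp only [trace, diag_apply, mul_apply, conjTranspose_apply, RCLike.star_def, RCLike.conj_mul,
    map_sum, ← RCLike.ofReal_pow, RCLike.ofReal_re]
  exact Finset.sum_comm

variable {𝕜 n : Type*} [RCLike 𝕜] [Fintype n] [DecidableEq n]

theorem Matrix.IsHermitian.trace_mul_conj_diagonal {ρ : Matrix n n 𝕜} (hρ : ρ.IsHermitian)
    (U : Matrix n n 𝕜) (d : n → ℝ) :
    (ρ * (U * diagonal (RCLike.ofReal ∘ d) * Uᴴ)).trace =
      ((∑ i, RCLike.re ((Uᴴ * ρ * U) i i) * d i : ℝ) : 𝕜) := by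
  rw [trace_mul_mul_diagonal_mul]
  push_cast
  simp only [Function.comp_apply, (isHermitian_conjTranspose_mul_mul U hρ).coe_re_apply_self]

namespace Matrix.IsHermitian

variable {A : Matrix n n 𝕜} (hA : A.IsHermitian)
include hA

theorem mul_self_eq_eigenvectorUnitary_mul_diagonal_mul :
    A * A = (hA.eigenvectorUnitary : Matrix n n 𝕜) *
      diagonal (RCLike.ofReal ∘ fun i => hA.eigenvalues i ^ 2) *
      (hA.eigenvectorUnitary : Matrix n n 𝕜)ᴴ := by
  conv_lhs => rw [hA.spectral_theorem, ← map_mul, diagonal_mul_diagonal]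
  simp only [Unitary.conjStarAlgAut_apply, Function.comp_def, sq, map_mul, star_eq_conjTranspose]

theorem re_trace_mul_self :
    RCLike.re (A * A).trace = ∑ i, hA.eigenvalues i ^ 2 := by
  rw [hA.mul_self_eq_eigenvectorUnitary_mul_diagonal_mul, trace_mul_cycle,
    ← star_eq_conjTranspose, Unitary.coe_star_mul_self, Matrix.one_mul, trace_diagonal]
  simp

end Matrix.IsHermitian

theorem frobNorm_sq_eq_sum_sq_eigenvalues {n : ℕ} {A : Matrix (Fin n) (Fin n) ℂ}
    (hA : A.IsHermitian) : frobNorm A ^ 2 = ∑ i, hA.eigenvalues i ^ 2 := by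
  rw [frobNorm, Real.sq_sqrt (by positivity), ← re_trace_conjTranspose_mul_self, hA.eq,
    ← hA.re_trace_mul_self]

/-- For a Hermitian matrix `A` and a density matrix `ρ`, the traces `Tr(ρA)` and
`Tr(ρA²)` are real and `Tr(ρA²) - (Tr(ρA))² ≤ ‖A‖₂²/2`. -/
theorem variance_bound_hermitian (n : ℕ) (A ρ : Matrix (Fin n) (Fin n) ℂ)
    (hA : A.IsHermitian) (hρ : ρ.PosSemidef) (hρtr : ρ.trace = 1) :
    (ρ * A).trace.im = 0 ∧ (ρ * (A * A)).trace.im = 0 ∧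
      (ρ * (A * A)).trace.re - ((ρ * A).trace.re) ^ 2 ≤ frobNorm A ^ 2 / 2 := by
  set U : Matrix (Fin n) (Fin n) ℂ := ↑hA.eigenvectorUnitary
  set p : Fin n → ℝ := fun i => ((Uᴴ * ρ * U) i i).re
  have hp : ∀ i, 0 ≤ p i := fun i =>
    (Complex.nonneg_iff.mp (hρ.conjTranspose_mul_mul_same U).diag_nonneg).1
  have hp1 : ∑ i, p i = 1 := by
    rw [show ∑ i, p i = (Uᴴ * ρ * U).trace.re from (Complex.re_sum _ _).symm,
      trace_mul_cycle, ← star_eq_conjTranspose,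
      Unitary.mul_star_self_of_mem hA.eigenvectorUnitary.2, Matrix.one_mul, hρtr, Complex.one_re]
  have htr : (ρ * A).trace = ((∑ i, p i * hA.eigenvalues i : ℝ) : ℂ) := by
    conv_lhs => rw [hA.spectral_theorem, Unitary.conjStarAlgAut_apply]
    exact hρ.isHermitian.trace_mul_conj_diagonal U _
  have htr_sq : (ρ * (A * A)).trace = ((∑ i, p i * hA.eigenvalues i ^ 2 : ℝ) : ℂ) := by
    rw [hA.mul_self_eq_eigenvectorUnitary_mul_diagonal_mul]
    exact hρ.isHermitian.trace_mul_conj_diagonal U _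
  refine ⟨by rw [htr, Complex.ofReal_im], by rw [htr_sq, Complex.ofReal_im], ?_⟩
  rw [htr, htr_sq, Complex.ofReal_re, Complex.ofReal_re, frobNorm_sq_eq_sum_sq_eigenvalues hA]
  exact sum_mul_sq_sub_sq_sum_mul_le hp hp1 _
end

section
/- Let d ≥ 1 and x : Fin d → ℂ. Then the maximum over all probability vectors p : Fin d → ℝ of the variance ∑ i, p i * |x i − ∑ j, p j * x j|² is attained and equals min over y ∈ ℂ of (max over i of |x i − y|)²; that is, the largest possible variance of a complex random variable with values x i equals the square of the radius of the smallest circle circumscribing the points x i. -/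
/-! Let `p` maximise the variance `V` over the simplex (it is compact) and let `m` be its mean.
Shifting weight `t` from `p` to a single point `x i` gives variance
`(1 - t) V + t (1 - t) ‖x i - m‖²`, so maximality forces `‖x i - m‖² ≤ V` for every `i`.
Conversely `V ≤ ∑ p i ‖x i - y‖² ≤ (max_i ‖x i - y‖)²` for every `y`, because the mean minimises
the weighted sum of squared distances. Hence `V` is the squared radius, attained at `y = m`. -/

open Finset Filter Topology

section WeightedVariance

variable {ι E : Type*} [Fintype ι] [NormedAddCommGroup E] [InnerProductSpace ℝ E]

def weightedMean (p : ι → ℝ) (x : ι → E) : E := ∑ i, p i • x i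

def weightedVariance (p : ι → ℝ) (x : ι → E) : ℝ := ∑ i, p i * ‖x i - weightedMean p x‖ ^ 2

theorem sum_mul_norm_sub_sq_eq {p : ι → ℝ} (hp : ∑ i, p i = 1) (x : ι → E) (y : E) :
    ∑ i, p i * ‖x i - y‖ ^ 2 = weightedVariance p x + ‖weightedMean p x - y‖ ^ 2 := by
  set m := weightedMean p x
  have hcentered : ∑ i, p i • (x i - m) = 0 := by
    simp only [smul_sub, sum_sub_distrib, ← sum_smul, hp, one_smul, m, weightedMean, sub_self]
  calc ∑ i, p i * ‖x i - y‖ ^ 2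
      = ∑ i, (p i * ‖x i - m‖ ^ 2 + 2 * inner ℝ (p i • (x i - m)) (m - y)
          + p i * ‖m - y‖ ^ 2) := by
        refine sum_congr rfl fun i _ => ?_
        rw [← sub_add_sub_cancel (x i) m y, norm_add_sq_real, real_inner_smul_left]
        ring
    _ = weightedVariance p x + ‖m - y‖ ^ 2 := by
        rw [sum_add_distrib, sum_add_distrib, ← mul_sum, ← sum_inner, hcentered, inner_zero_left,
          ← sum_mul, hp]
        simp [weightedVariance, m]

theorem weightedVariance_le_sum_mul_norm_sub_sq {p : ι → ℝ} (hp : ∑ i, p i = 1) (x : ι → E)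
    (y : E) : weightedVariance p x ≤ ∑ i, p i * ‖x i - y‖ ^ 2 := by
  rw [sum_mul_norm_sub_sq_eq hp]
  exact le_add_of_nonneg_right (sq_nonneg _)

theorem weightedVariance_le_sq_iSup_norm_sub {p : ι → ℝ} (hp : p ∈ stdSimplex ℝ ι) (x : ι → E)
    (y : E) : weightedVariance p x ≤ (⨆ i, ‖x i - y‖) ^ 2 :=
  calc weightedVariance p x ≤ ∑ i, p i * ‖x i - y‖ ^ 2 :=
        weightedVariance_le_sum_mul_norm_sub_sq hp.2 x y
    _ ≤ ∑ i, p i * (⨆ j, ‖x j - y‖) ^ 2 := by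
        gcongr with i
        · exact hp.1 i
        · exact le_ciSup (Finite.bddAbove_range fun j => ‖x j - y‖) i
    _ = (⨆ j, ‖x j - y‖) ^ 2 := by rw [← sum_mul, hp.2, one_mul]

variable [DecidableEq ι]

theorem weightedVariance_smul_add_smul_single {p : ι → ℝ} (hp : ∑ i, p i = 1) (x : ι → E) (i : ι)
    (t : ℝ) :
    weightedVariance ((1 - t) • p + t • Pi.single i 1) x
      = (1 - t) * weightedVariance p x + t * (1 - t) * ‖x i - weightedMean p x‖ ^ 2 := by
  set q := (1 - t) • p + t • Pi.single i (1 : ℝ)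
  set m := weightedMean p x
  have hsum : ∀ f : ι → ℝ, ∑ j, q j * f j = (1 - t) * ∑ j, p j * f j + t * f i := by
    intro f
    simp [q, add_mul, sum_add_distrib, mul_sum, Pi.single_apply, mul_assoc]
  have hmean : weightedMean q x = m + t • (x i - m) := by
    simp only [weightedMean, q, m, Pi.add_apply, Pi.smul_apply, smul_eq_mul, add_smul,
      sum_add_distrib, Pi.single_apply, ite_smul, zero_smul, sum_ite_eq', mem_univ, if_true,
      ← smul_smul, ← smul_sum]
    module
  have hm : m - weightedMean q x = (-t) • (x i - m) := by rw [hmean]; module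
  have hxi : x i - weightedMean q x = (1 - t) • (x i - m) := by rw [hmean]; module
  rw [weightedVariance, hsum, sum_mul_norm_sub_sq_eq hp, hm, hxi, norm_smul, norm_smul, mul_pow,
    mul_pow, Real.norm_eq_abs, Real.norm_eq_abs, sq_abs, sq_abs]
  ring

theorem norm_sub_weightedMean_sq_le_of_isMaxOn {p : ι → ℝ} {x : ι → E} (hp : p ∈ stdSimplex ℝ ι)
    (hmax : IsMaxOn (weightedVariance · x) (stdSimplex ℝ ι) p) (i : ι) :
    ‖x i - weightedMean p x‖ ^ 2 ≤ weightedVariance p x := by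
  set a := ‖x i - weightedMean p x‖ ^ 2
  have hmix : ∀ t ∈ Set.Ioo (0 : ℝ) 1, (1 - t) * a ≤ weightedVariance p x := by
    intro t ⟨ht0, ht1⟩
    have hq : (1 - t) • p + t • Pi.single i 1 ∈ stdSimplex ℝ ι :=
      convex_stdSimplex ℝ ι hp (single_mem_stdSimplex ℝ i) (by linarith) ht0.le (by ring)
    have hle : weightedVariance ((1 - t) • p + t • Pi.single i 1) x ≤ weightedVariance p x :=
      hmax hq
    rw [weightedVariance_smul_add_smul_single hp.2] at hle
    nlinarith
  have hlim : Tendsto (fun t : ℝ => (1 - t) * a) (𝓝[>] 0) (𝓝 a) := by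
    have : Tendsto (fun t : ℝ => (1 - t) * a) (𝓝 0) (𝓝 ((1 - 0) * a)) :=
      ((continuous_const.sub continuous_id).mul continuous_const).tendsto 0
    simpa using this.mono_left nhdsWithin_le_nhds
  exact le_of_tendsto hlim (eventually_of_mem (Ioo_mem_nhdsGT one_pos) hmix)

theorem exists_isMaxOn_weightedVariance [Nonempty ι] (x : ι → E) :
    ∃ p ∈ stdSimplex ℝ ι, IsMaxOn (weightedVariance · x) (stdSimplex ℝ ι) p :=
  (isCompact_stdSimplex ℝ ι).exists_isMaxOn
    ⟨Pi.single (Classical.arbitrary ι) 1, single_mem_stdSimplex ℝ _⟩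
    (by unfold weightedVariance weightedMean; fun_prop)

theorem iInf_sq_iSup_norm_sub_eq_weightedVariance [Nonempty ι] {p : ι → ℝ} {x : ι → E}
    (hp : p ∈ stdSimplex ℝ ι) (hmax : IsMaxOn (weightedVariance · x) (stdSimplex ℝ ι) p) :
    ⨅ y, (⨆ i, ‖x i - y‖) ^ 2 = weightedVariance p x := by
  refine le_antisymm ?_ (le_ciInf fun y => weightedVariance_le_sq_iSup_norm_sub hp x y)
  have hbdd : BddBelow (Set.range fun y => (⨆ i, ‖x i - y‖) ^ 2) :=
    ⟨0, by rintro _ ⟨y, rfl⟩; positivity⟩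
  refine ciInf_le_of_le hbdd (weightedMean p x) ?_
  obtain ⟨i, hi⟩ := exists_eq_ciSup_of_finite (f := fun i => ‖x i - weightedMean p x‖)
  rw [← hi]
  exact norm_sub_weightedMean_sq_le_of_isMaxOn hp hmax i

end WeightedVariance

/-- The maximal variance of a complex random variable taking the values `x i`
is attained and equals the square of the radius of the smallest circle
circumscribing the points `x i`. -/
theorem max_variance_eq_radius_sq (d : ℕ) (hd : 1 ≤ d) (x : Fin d → ℂ) :
    ∃ p : Fin d → ℝ, (∀ i, 0 ≤ p i) ∧ (∑ i, p i = 1) ∧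
      (∀ q : Fin d → ℝ, (∀ i, 0 ≤ q i) → (∑ i, q i = 1) →
        ∑ i, q i * ‖x i - ∑ j, (q j : ℂ) * x j‖ ^ 2
          ≤ ∑ i, p i * ‖x i - ∑ j, (p j : ℂ) * x j‖ ^ 2) ∧
      ∑ i, p i * ‖x i - ∑ j, (p j : ℂ) * x j‖ ^ 2
        = ⨅ y : ℂ, (⨆ i, ‖x i - y‖) ^ 2 := by
  have : Nonempty (Fin d) := ⟨⟨0, hd⟩⟩
  have hvar (q : Fin d → ℝ) :
      ∑ i, q i * ‖x i - ∑ j, (q j : ℂ) * x j‖ ^ 2 = weightedVariance q x := by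
    simp only [weightedVariance, weightedMean, Complex.real_smul]
  obtain ⟨p, hp, hmax⟩ := exists_isMaxOn_weightedVariance x
  simp only [hvar]
  exact ⟨p, hp.1, hp.2, fun q hq0 hq1 => hmax ⟨hq0, hq1⟩,
    (iInf_sq_iSup_norm_sub_eq_weightedVariance hp hmax).symm⟩
end

section
/- Let d ≥ 2 and let N be a norm on ℂ^d that is permutation invariant (N(x ∘ π) = N(x) for every permutation π of Fin d) and invariant under multiplying each coordinate by a unimodular complex number. For x : Fin d → ℂ, let M₁ ≥ M₂ denote the largest and second largest values among the moduli |x i|, and let F = (1, 1, 0, …, 0) ∈ ℂ^d. Then (M₁ + M₂)/2 ≤ N(x)/N(F) ≤ max(M₁, (∑ i, |x i|)/2). -/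
open BigOperators

/-- The entries of `v` sorted in non-increasing order: `sortedDesc v 0` is the largest, etc. -/
noncomputable def sortedDesc {d : ℕ} (v : Fin d → ℝ) : Fin d → ℝ :=
  fun k => v (Tuple.sort v k.rev)

open Finset

/-!
Unimodular invariance makes `N` monotone in the moduli of the coordinates, because a complex
number of modulus at most one is the midpoint of two unimodular ones; permutation invariance
gives every pair indicator `eᵢ + eⱼ` the norm of `F`.

Lower bound: if `c` keeps only the two largest entries of `|x|`, at `i` and `j`, then
`c + c ∘ swap i j = (M₁ + M₂) • (eᵢ + eⱼ)`, so `(M₁ + M₂) N(F) ≤ 2 N(c) ≤ 2 N(x)`.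

Upper bound: write `|x|`, with maximum `M` and sum `S`, as a nonnegative combination of pair
indicators and at most one `eᵢ`, of total weight `max M (S / 2)`. If the largest entry dominates
the sum of the others, pair it with each of them. Otherwise lower two further nonzero entries by a
common amount, until one of them vanishes or the largest entry becomes half of the new sum;
the first alternative shrinks the support, the second is the dominant case.
-/

section Combinatorial

variable {ι : Type*} [Fintype ι]

theorem card_filter_pos_lt_of_le {α : Type*} [LinearOrder α] [Zero α] {a b : ι → α}
    (hab : a ≤ b) {j : ι} (haj : a j ≤ 0) (hbj : 0 < b j) : #{m | 0 < a m} < #{m | 0 < b m} := by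
  refine card_lt_card ((ssubset_iff_of_subset ?_).2 ⟨j, by simpa using hbj, by simpa using haj⟩)
  exact monotone_filter_right _ fun m _ hm => hm.trans_le (hab m)

variable [DecidableEq ι]

theorem exists_pos_pair_of_two_mul_lt_sum {a : ι → ℝ} {i : ι} (hi : ∀ j, a j ≤ a i)
    (hi₀ : 0 ≤ a i) (hlt : 2 * a i < ∑ j, a j) :
    ∃ j k, j ≠ k ∧ j ≠ i ∧ k ≠ i ∧ 0 < a j ∧ a j ≤ a k := by
  have hsum_i := add_sum_erase univ a (mem_univ i)
  obtain ⟨j, hj, hj_pos⟩ : ∃ j ∈ univ.erase i, 0 < a j :=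
    exists_lt_of_sum_lt (by rw [sum_const_zero]; linarith)
  have hsum_j := add_sum_erase _ a hj
  obtain ⟨k, hk, hk_pos⟩ : ∃ k ∈ (univ.erase i).erase j, 0 < a k :=
    exists_lt_of_sum_lt (by rw [sum_const_zero]; linarith [hi j])
  obtain ⟨hkj, hki⟩ : k ≠ j ∧ k ≠ i := by simpa using hk
  have hji : j ≠ i := ne_of_mem_erase hj
  rcases le_total (a j) (a k) with h | h
  · exact ⟨j, k, hkj.symm, hji, hki, hj_pos, h⟩
  · exact ⟨k, j, hkj, hki, hji, hk_pos, h⟩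

namespace Seminorm

variable (q : Seminorm ℝ (ι → ℝ)) {C : ℝ}

theorem apply_le_of_sum_erase_le {i : ι} (hsingle : q (Pi.single i 1) ≤ C)
    (hpair : ∀ j ≠ i, q (Pi.single i 1 + Pi.single j 1) ≤ C) {a : ι → ℝ} (ha : 0 ≤ a)
    (hi : ∑ j ∈ univ.erase i, a j ≤ a i) : q a ≤ a i * C := by
  set r := ∑ j ∈ univ.erase i, a j
  have hdecomp : a = (a i - r) • Pi.single i 1
      + ∑ j ∈ univ.erase i, a j • (Pi.single i 1 + Pi.single j 1) := by
    ext k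
    rcases eq_or_ne k i with rfl | hk
    · simp [r, Finset.sum_apply, Pi.single_apply, sum_add_distrib]
    · simp [r, Finset.sum_apply, Pi.single_apply, hk]
  calc q a ≤ q ((a i - r) • Pi.single i 1)
        + ∑ j ∈ univ.erase i, q (a j • (Pi.single i 1 + Pi.single j 1)) :=
        (congrArg q hdecomp).trans_le <| (map_add_le_add q _ _).trans <| add_le_add le_rfl
          (le_sum_of_subadditive q (map_zero q).le (map_add_le_add q) _ _)
    _ = (a i - r) * q (Pi.single i 1)
        + ∑ j ∈ univ.erase i, a j * q (Pi.single i 1 + Pi.single j 1) := by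
        rw [map_smul_eq_mul, Real.norm_of_nonneg (sub_nonneg.2 hi)]
        exact congrArg _ <| sum_congr rfl fun j _ => by
          rw [map_smul_eq_mul, Real.norm_of_nonneg (ha j)]
    _ ≤ (a i - r) * C + ∑ j ∈ univ.erase i, a j * C := by
        gcongr with j hj
        exacts [ha j, hpair j (ne_of_mem_erase hj)]
    _ = a i * C := by rw [← sum_mul]; ring

theorem apply_le_half_sum_mul_of_two_mul_le_sum (hsingle : ∀ i, q (Pi.single i 1) ≤ C)
    (hpair : ∀ i j, i ≠ j → q (Pi.single i 1 + Pi.single j 1) ≤ C) (a : ι → ℝ) (ha : 0 ≤ a)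
    (hbal : ∀ i, 2 * a i ≤ ∑ j, a j) : q a ≤ (∑ j, a j) / 2 * C := by
  rcases eq_or_ne a 0 with rfl | hne
  · simp
  have : Nonempty ι := let ⟨i, _⟩ := Function.ne_iff.1 hne; ⟨i⟩
  obtain ⟨i, hi⟩ := Finite.exists_max a
  set S := ∑ j, a j
  have hdominant : ∀ b : ι → ℝ, 0 ≤ b → ∑ j, b j = 2 * b i → q b ≤ b i * C := fun b hb hbi =>
    q.apply_le_of_sum_erase_le (hsingle i) (fun j hj => hpair i j hj.symm) hb
      (by linarith [add_sum_erase univ b (mem_univ i)])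
  rcases (hbal i).eq_or_lt with htight | hlt
  · calc q a ≤ a i * C := hdominant a ha htight.symm
      _ = S / 2 * C := by rw [← htight]; ring
  obtain ⟨j, k, hjk, hji, hki, hj_pos, hjk_le⟩ := exists_pos_pair_of_two_mul_lt_sum hi (ha i) hlt
  set t := min (a j) ((S - 2 * a i) / 2) with ht
  have ht_pos : 0 < t := lt_min hj_pos (by linarith)
  have ht_le : t ≤ a j := min_le_left _ _
  set a' := a - t • (Pi.single j 1 + Pi.single k 1) with ha'
  have ha'_apply : ∀ m, a' m = a m - (if m = j then t else 0) - (if m = k then t else 0) := by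
    intro m
    simp [a', Pi.single_apply, sub_sub]
  have ha'_le : a' ≤ a := fun m => by
    rw [ha'_apply]; split_ifs <;> linarith
  have ha'_nonneg : 0 ≤ a' := fun m => by
    rcases eq_or_ne m j with rfl | hmj
    · simp [ha'_apply, hjk, ht_le]
    rcases eq_or_ne m k with rfl | hmk
    · simp [ha'_apply, hmj]; linarith
    · simpa [ha'_apply, hmj, hmk] using ha m
  have hsum' : ∑ m, a' m = S - 2 * t := by
    simp only [ha'_apply, sum_sub_distrib, sum_ite_eq', mem_univ, if_true, S]
    ring
  have hqa : q a ≤ q a' + t * C :=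
    calc q a = q (a' + t • (Pi.single j 1 + Pi.single k 1)) := by rw [ha', sub_add_cancel]
      _ ≤ q a' + t * q (Pi.single j 1 + Pi.single k 1) := (map_add_le_add q _ _).trans_eq
          (by rw [map_smul_eq_mul, Real.norm_of_nonneg ht_pos.le])
      _ ≤ q a' + t * C := by gcongr; exact hpair j k hjk
  have hqa' : q a' ≤ (S - 2 * t) / 2 * C := by
    rcases min_cases (a j) ((S - 2 * a i) / 2) with ⟨htj, hj_le⟩ | ⟨htg, -⟩
    · have hdec : #{m | 0 < a' m} < #{m | 0 < a m} :=
        card_filter_pos_lt_of_le ha'_le (by simp [ha'_apply, hjk, ht, htj]) hj_pos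
      rw [← hsum']
      refine apply_le_half_sum_mul_of_two_mul_le_sum hsingle hpair a' ha'_nonneg fun m => ?_
      linarith [ha'_le m, hi m]
    · have ha'i : a' i = a i := by simp [ha'_apply, hji.symm, hki.symm]
      calc q a' ≤ a' i * C := hdominant a' ha'_nonneg (by linarith)
        _ = (S - 2 * t) / 2 * C := by rw [ha'i, ht, htg]; ring
  calc q a ≤ q a' + t * C := hqa
    _ ≤ (S - 2 * t) / 2 * C + t * C := by gcongr
    _ = S / 2 * C := by ring
termination_by #{m | 0 < a m}
decreasing_by exact hdec

theorem apply_le_max_mul (hsingle : ∀ i, q (Pi.single i 1) ≤ C)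
    (hpair : ∀ i j, i ≠ j → q (Pi.single i 1 + Pi.single j 1) ≤ C) {a : ι → ℝ} (ha : 0 ≤ a)
    {i : ι} (hi : ∀ j, a j ≤ a i) : q a ≤ max (a i) ((∑ j, a j) / 2) * C := by
  rcases le_or_gt (2 * a i) (∑ j, a j) with hbal | hdom
  · rw [max_eq_right (by linarith)]
    exact q.apply_le_half_sum_mul_of_two_mul_le_sum hsingle hpair a ha
      fun j => by linarith [hi j]
  · rw [max_eq_left (by linarith)]
    exact q.apply_le_of_sum_erase_le (hsingle i) (fun j hj => hpair i j hj.symm) ha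
      (by linarith [add_sum_erase univ a (mem_univ i)])

end Seminorm

end Combinatorial

theorem Complex.exists_eq_midpoint_of_norm_le_one {c : ℂ} (hc : ‖c‖ ≤ 1) :
    ∃ w₁ w₂ : ℂ, ‖w₁‖ = 1 ∧ ‖w₂‖ = 1 ∧ (w₁ + w₂) / 2 = c := by
  set φ := Real.arccos ‖c‖
  refine ⟨exp (↑(arg c + φ) * I), exp (↑(arg c - φ) * I), norm_exp_ofReal_mul_I _,
    norm_exp_ofReal_mul_I _, ?_⟩
  have hcos : Real.cos φ = ‖c‖ := Real.cos_arccos (by linarith [norm_nonneg c]) hc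
  calc (exp (↑(arg c + φ) * I) + exp (↑(arg c - φ) * I)) / 2
      = ↑(Real.cos φ) * exp (↑(arg c) * I) := by
        rw [ofReal_cos, cos.eq_1]
        push_cast
        rw [sub_eq_add_neg, add_mul, add_mul, exp_add, exp_add, neg_mul]
        ring
    _ = c := by rw [hcos, norm_mul_exp_arg_mul_I]

theorem Equiv.Perm.exists_apply_eq_and_apply_eq {ι : Type*} [DecidableEq ι] {i j i' j' : ι}
    (hij : i ≠ j) (hij' : i' ≠ j') : ∃ π : Equiv.Perm ι, π i = i' ∧ π j = j' := by
  set k := Equiv.swap i i' j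
  have hki' : k ≠ i' := by
    simpa [k] using (Equiv.swap i i').injective.ne hij.symm
  refine ⟨Equiv.swap k j' * Equiv.swap i i', ?_, ?_⟩
  · simp [Equiv.swap_apply_of_ne_of_ne hki'.symm hij']
  · simp [k]

namespace Seminorm

variable {ι : Type*} (p : Seminorm ℂ (ι → ℂ))

theorem apply_le_apply_of_norm_le
    (hunimod : ∀ w u : ι → ℂ, (∀ i, ‖w i‖ = 1) → p (fun i => w i * u i) = p u)
    {u v : ι → ℂ} (huv : ∀ i, ‖u i‖ ≤ ‖v i‖) : p u ≤ p v := by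
  have hratio : ∀ i, ‖u i / v i‖ ≤ 1 := fun i => by
    rw [norm_div]; exact div_le_one_of_le₀ (huv i) (norm_nonneg _)
  choose w₁ w₂ hw₁ hw₂ hw using fun i => Complex.exists_eq_midpoint_of_norm_le_one (hratio i)
  have hu : u = (1 / 2 : ℂ) • ((fun i => w₁ i * v i) + fun i => w₂ i * v i) := by
    ext i
    rcases eq_or_ne (v i) 0 with hv | hv
    · simpa [hv] using huv i
    · rw [← div_mul_cancel₀ (u i) hv, ← hw i]
      simp only [Pi.smul_apply, Pi.add_apply, smul_eq_mul]
      ring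
  calc p u ≤ ‖(1 / 2 : ℂ)‖ * (p (fun i => w₁ i * v i) + p (fun i => w₂ i * v i)) := by
        rw [hu, map_smul_eq_mul]; gcongr; exact map_add_le_add p _ _
    _ = p v := by rw [hunimod _ _ hw₁, hunimod _ _ hw₂]; norm_num; ring

variable [DecidableEq ι]

theorem apply_single_add_single_eq
    (hperm : ∀ (π : Equiv.Perm ι) (u : ι → ℂ), p (u ∘ π) = p u) {i j i' j' : ι}
    (hij : i ≠ j) (hij' : i' ≠ j') :
    p (Pi.single i 1 + Pi.single j 1) = p (Pi.single i' 1 + Pi.single j' 1) := by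
  obtain ⟨π, hπi, hπj⟩ := Equiv.Perm.exists_apply_eq_and_apply_eq hij' hij
  rw [← hperm π, Pi.add_comp, Pi.single_comp_equiv, Pi.single_comp_equiv,
    π.symm_apply_eq.2 hπi.symm, π.symm_apply_eq.2 hπj.symm]

theorem norm_add_norm_mul_apply_single_add_single_le
    (hunimod : ∀ w u : ι → ℂ, (∀ i, ‖w i‖ = 1) → p (fun i => w i * u i) = p u)
    (hperm : ∀ (π : Equiv.Perm ι) (u : ι → ℂ), p (u ∘ π) = p u) (x : ι → ℂ) {i j : ι}
    (hij : i ≠ j) : (‖x i‖ + ‖x j‖) * p (Pi.single i 1 + Pi.single j 1) ≤ 2 * p x := by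
  set c : ι → ℂ := Pi.single i (‖x i‖ : ℂ) + Pi.single j (‖x j‖ : ℂ)
  have hcx : p c ≤ p x := p.apply_le_apply_of_norm_le hunimod fun k => by
    rcases eq_or_ne k i with rfl | hki
    · simp [c, hij]
    rcases eq_or_ne k j with rfl | hkj
    · simp [c, hki]
    · simp [c, hki, hkj]
  have hswap : c + c ∘ Equiv.swap i j
      = ((‖x i‖ + ‖x j‖ : ℝ) : ℂ) • (Pi.single i 1 + Pi.single j 1) := by
    ext k
    rcases eq_or_ne k i with rfl | hki
    · simp [c, hij]
    rcases eq_or_ne k j with rfl | hkj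
    · simp [c, hki]; ring
    · simp [c, hki, hkj, Equiv.swap_apply_of_ne_of_ne hki hkj]
  calc (‖x i‖ + ‖x j‖) * p (Pi.single i 1 + Pi.single j 1) = p (c + c ∘ Equiv.swap i j) := by
        rw [hswap, map_smul_eq_mul, Complex.norm_real, Real.norm_of_nonneg (by positivity)]
    _ ≤ p c + p (c ∘ Equiv.swap i j) := map_add_le_add p _ _
    _ = 2 * p c := by rw [hperm]; ring
    _ ≤ 2 * p x := by gcongr

theorem apply_le_max_mul_apply_single_add_single [Fintype ι]
    (hunimod : ∀ w u : ι → ℂ, (∀ i, ‖w i‖ = 1) → p (fun i => w i * u i) = p u)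
    (hperm : ∀ (π : Equiv.Perm ι) (u : ι → ℂ), p (u ∘ π) = p u) (x : ι → ℂ)
    {i : ι} (hi : ∀ j, ‖x j‖ ≤ ‖x i‖) {i₀ j₀ : ι} (h₀ : i₀ ≠ j₀) :
    p x ≤ max ‖x i‖ ((∑ j, ‖x j‖) / 2) * p (Pi.single i₀ 1 + Pi.single j₀ 1) := by
  have : Nontrivial ι := ⟨⟨i₀, j₀, h₀⟩⟩
  let q : Seminorm ℝ (ι → ℝ) :=
    (p.restrictScalars ℝ).comp (LinearMap.compLeft Complex.ofRealCLM.toLinearMap ι)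
  have hq : ∀ a, q a = p (fun k => (a k : ℂ)) := fun _ => rfl
  have hcast : ∀ k m, ((Pi.single k 1 : ι → ℝ) m : ℂ) = (Pi.single k 1 : ι → ℂ) m := fun k m => by
    by_cases hmk : m = k <;> simp [hmk]
  have hq_single : ∀ k, q (Pi.single k 1) = p (Pi.single k 1) := fun k => by
    simp only [hq, hcast]
  have hq_pair : ∀ k l, q (Pi.single k 1 + Pi.single l 1) = p (Pi.single k 1 + Pi.single l 1) :=
    fun k l => by simp only [hq, Pi.add_apply, Complex.ofReal_add, hcast]; rfl
  have hpx : p x = q (fun k => ‖x k‖) :=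
    le_antisymm (p.apply_le_apply_of_norm_le hunimod fun k => by simp)
      (p.apply_le_apply_of_norm_le hunimod fun k => by simp)
  rw [hpx]
  refine q.apply_le_max_mul (fun k => ?_) (fun k l hkl => ?_) (fun k => norm_nonneg _) hi
  · obtain ⟨l, hlk⟩ := exists_ne k
    calc q (Pi.single k 1) = p (Pi.single k 1) := hq_single k
      _ ≤ p (Pi.single k 1 + Pi.single l 1) := p.apply_le_apply_of_norm_le hunimod fun m => by
          rcases eq_or_ne m k with rfl | hmk
          · simp [hlk.symm]
          · simp [hmk]
      _ = p (Pi.single i₀ 1 + Pi.single j₀ 1) := p.apply_single_add_single_eq hperm hlk.symm h₀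
  · rw [hq_pair]
    exact (p.apply_single_add_single_eq hperm hkl h₀).le

end Seminorm

/-- For a permutation invariant norm `N` on `ℂ^d` (invariant under permutations of the
coordinates and under multiplication of each coordinate by a unimodular number), and
`F = (1,1,0,…,0)`, every `x` satisfies
`(M₁ + M₂)/2 ≤ N(x)/N(F) ≤ max(M₁, (∑ i, |x i|)/2)`,
where `M₁ ≥ M₂` are the two largest moduli of the entries of `x`. -/
theorem pi_norm_two_largest_bounds (d : ℕ) (hd : 2 ≤ d)
    (N : (Fin d → ℂ) → ℝ)
    (hN_triangle : ∀ u v : Fin d → ℂ, N (u + v) ≤ N u + N v)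
    (hN_smul : ∀ (a : ℂ) (u : Fin d → ℂ), N (a • u) = ‖a‖ * N u)
    (hN_pos : ∀ u : Fin d → ℂ, u ≠ 0 → 0 < N u)
    (hN_perm : ∀ (π : Equiv.Perm (Fin d)) (u : Fin d → ℂ), N (u ∘ π) = N u)
    (hN_unimod : ∀ (w u : Fin d → ℂ), (∀ i, ‖w i‖ = 1) →
      N (fun i => w i * u i) = N u)
    (x : Fin d → ℂ)
    (F : Fin d → ℂ) (hF : F = fun i : Fin d => if i.val < 2 then (1 : ℂ) else 0) :
    (sortedDesc (fun i => ‖x i‖) ⟨0, by omega⟩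
        + sortedDesc (fun i => ‖x i‖) ⟨1, by omega⟩) / 2
      ≤ N x / N F
    ∧ N x / N F
      ≤ max (sortedDesc (fun i => ‖x i‖) ⟨0, by omega⟩)
          ((∑ i, ‖x i‖) / 2) := by
  let p : Seminorm ℂ (Fin d → ℂ) := Seminorm.of N hN_triangle hN_smul
  set i₀ : Fin d := ⟨0, by omega⟩
  set i₁ : Fin d := ⟨1, by omega⟩
  have h₀₁ : i₀ ≠ i₁ := by simp [i₀, i₁, Fin.ext_iff]
  have hF' : F = Pi.single i₀ 1 + Pi.single i₁ 1 := by
    subst hF; ext ⟨_ | _ | k, hk⟩ <;> simp [Fin.ext_iff, i₀, i₁]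
  have hNF : 0 < N F := hN_pos F fun h => by simpa [hF', h₀₁] using congrFun h i₀
  set σ := Tuple.sort fun i => ‖x i‖
  have hmax : ∀ k, ‖x k‖ ≤ ‖x (σ i₀.rev)‖ := fun k => by
    have hk : σ.symm k ≤ i₀.rev := by
      rw [Fin.le_iff_val_le_val, Fin.val_rev]; simp [i₀]; omega
    simpa [σ] using Tuple.monotone_sort (fun i => ‖x i‖) hk
  have hσ : σ i₀.rev ≠ σ i₁.rev := σ.injective.ne (Fin.rev_injective.ne h₀₁)
  have hlow := p.norm_add_norm_mul_apply_single_add_single_le hN_unimod hN_perm x hσ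
  rw [p.apply_single_add_single_eq hN_perm hσ h₀₁, ← hF'] at hlow
  constructor
  · rw [le_div_iff₀ hNF]
    change (‖x (σ i₀.rev)‖ + ‖x (σ i₁.rev)‖) / 2 * N F ≤ N x
    change _ * N F ≤ 2 * N x at hlow
    linarith
  · rw [div_le_iff₀ hNF, hF']
    exact p.apply_le_max_mul_apply_single_add_single hN_unimod hN_perm x hmax h₀₁
end

section
/- Let X be a d × d complex matrix and suppose y₀ ∈ ℂ minimizes the function y ↦ ‖X − y·I‖ over ℂ, where ‖·‖ is the operator norm. Then y₀ lies in the numerical range W(X) = {⟨ψ, X*ψ⟩ : ψ ∈ ℂ^d, ‖ψ‖ = 1} (Stampfli). -/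
/-!
Put `Y = X - y₀ I`. By Toeplitz–Hausdorff `W(Y)` is compact and convex, so it has a point `z`
nearest to `0`, and then `Re (conj z * u) ≥ |z|²` for all `u ∈ W(Y)`. Take a unit vector `x` with
`‖(Y - z I) x‖ = ‖Y - z I‖`. Minimality of `y₀` gives `‖Y x‖ ≤ ‖Y‖ ≤ ‖(Y - z I) x‖`, that is
`2 Re (conj z * ⟨x, Y x⟩) ≤ |z|²`; hence `2 |z|² ≤ |z|²`, so `z = 0` and `y₀ ∈ W(X)`.
-/

open Matrix BigOperators

open scoped Classical in
/-- The largest eigenvalue of a (Hermitian) matrix. -/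
noncomputable def lamMax {d : ℕ} (M : Matrix (Fin d) (Fin d) ℂ) : ℝ :=
  if h : M.IsHermitian then ⨆ i, h.eigenvalues i else 0

/-- The operator norm of a matrix: `‖A‖ = sqrt(λ_max(Aᴴ A))`. -/
noncomputable def opNorm {d : ℕ} (A : Matrix (Fin d) (Fin d) ℂ) : ℝ :=
  Real.sqrt (lamMax (Aᴴ * A))

open scoped InnerProductSpace ComplexConjugate

theorem zero_mem_of_forall_exists_two_inner_le {F : Type*} [NormedAddCommGroup F]
    [InnerProductSpace ℝ F] {K : Set F} (hne : K.Nonempty) (hK : IsComplete K) (hconv : Convex ℝ K)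
    (h : ∀ w, ∃ z ∈ K, 2 * ⟪w, z⟫_ℝ ≤ ‖w‖ ^ 2) : (0 : F) ∈ K := by
  obtain ⟨v, hvK, hv⟩ := exists_norm_eq_iInf_of_complete_convex hne hK hconv 0
  obtain ⟨z, hzK, hz⟩ := h v
  have hproj := (norm_eq_iInf_iff_real_inner_le_zero hconv hvK).1 hv z hzK
  rw [zero_sub, inner_neg_left, inner_sub_right, real_inner_self_eq_norm_sq] at hproj
  have hv0 : ‖v‖ = 0 := by nlinarith [norm_nonneg v]
  rwa [norm_eq_zero.1 hv0] at hvK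

section NumericalRange

variable {E : Type*} [NormedAddCommGroup E] [InnerProductSpace ℂ E]

def numericalRange (T : E →ₗ[ℂ] E) : Set ℂ :=
  (fun x => ⟪x, T x⟫_ℂ) '' Metric.sphere 0 1

theorem inner_map_self_div_norm_sq_mem_numericalRange (T : E →ₗ[ℂ] E) {x : E} (hx : x ≠ 0) :
    ⟪x, T x⟫_ℂ / (‖x‖ : ℂ) ^ 2 ∈ numericalRange T := by
  have hx' : (‖x‖ : ℂ) ≠ 0 := by exact_mod_cast norm_ne_zero_iff.2 hx
  refine ⟨(‖x‖⁻¹ : ℂ) • x, ?_, ?_⟩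
  · simp [norm_smul, hx]
  · simp only [map_smul, inner_smul_left, inner_smul_right, map_inv₀, Complex.conj_ofReal]
    field_simp

theorem Complex.exists_ne_zero_im_conj_mul_eq_zero (e : ℂ) :
    ∃ α : ℂ, α ≠ 0 ∧ (conj α * e).im = 0 := by
  rcases eq_or_ne e 0 with rfl | he
  · exact ⟨1, one_ne_zero, by simp⟩
  · exact ⟨e, he, by simp [Complex.mul_im]; ring⟩

theorem inner_map_self_real_smul_add_real_smul (T : E →ₗ[ℂ] E) (x y : E) (a b : ℝ) :
    ⟪(a : ℂ) • x + (b : ℂ) • y, T ((a : ℂ) • x + (b : ℂ) • y)⟫_ℂ =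
      (a ^ 2 : ℝ) * ⟪x, T x⟫_ℂ + (a * b : ℝ) * (⟪x, T y⟫_ℂ + ⟪y, T x⟫_ℂ) +
        (b ^ 2 : ℝ) * ⟪y, T y⟫_ℂ := by
  simp only [map_add, map_smul, inner_add_left, inner_add_right, inner_smul_left,
    inner_smul_right, Complex.conj_ofReal]
  push_cast
  ring

theorem ofReal_mem_numericalRange_of_inner_eq_zero_of_inner_eq_one {T : E →ₗ[ℂ] E} {x y : E}
    (hx : x ≠ 0) (hy : ‖y‖ = 1) (hTx : ⟪x, T x⟫_ℂ = 0) (hTy : ⟪y, T y⟫_ℂ = 1)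
    {t : ℝ} (ht : t ∈ Set.Icc 0 1) : (t : ℂ) ∈ numericalRange T := by
  -- Rotating `x` by a phase makes the quadratic form real on the segment from `α • x` to `y`;
  -- its Rayleigh quotient then runs continuously from `0` to `1`.
  obtain ⟨α, hα, hαim⟩ :=
    Complex.exists_ne_zero_im_conj_mul_eq_zero (⟪x, T y⟫_ℂ - conj ⟪y, T x⟫_ℂ)
  set x' := α • x
  have hx' : x' ≠ 0 := smul_ne_zero hα hx
  have hTx' : ⟪x', T x'⟫_ℂ = 0 := by simp [x', hTx]
  obtain ⟨r, hr⟩ : ∃ r : ℝ, ⟪x', T y⟫_ℂ + ⟪y, T x'⟫_ℂ = r := by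
    refine ⟨(⟪x', T y⟫_ℂ + ⟪y, T x'⟫_ℂ).re, Complex.ext rfl ?_⟩
    simp only [x', map_smul, inner_smul_left, inner_smul_right, Complex.add_im, Complex.mul_im,
      Complex.conj_re, Complex.conj_im, Complex.ofReal_im, Complex.sub_re, Complex.sub_im] at hαim ⊢
    linarith
  set w : ℝ → E := fun s => ((1 - s : ℝ) : ℂ) • x' + (s : ℂ) • y
  have hq : ∀ s, ⟪w s, T (w s)⟫_ℂ = ((s ^ 2 + (1 - s) * s * r : ℝ) : ℂ) := fun s => by
    rw [inner_map_self_real_smul_add_real_smul, hTx', hTy, hr]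
    push_cast
    ring
  have hw : ∀ s, w s ≠ 0 := by
    intro s hws
    have h := congrArg (fun v => ⟪v, T v⟫_ℂ) (eq_neg_of_add_eq_zero_left hws)
    simp only [map_neg, map_smul, inner_neg_left, inner_neg_right, inner_smul_left,
      inner_smul_right, hTx', hTy, Complex.conj_ofReal, mul_zero, mul_one, mul_neg, neg_neg] at h
    have hs : s = 0 := by exact_mod_cast mul_self_eq_zero.1 h.symm
    simp [w, hs, hx'] at hws
  set g : ℝ → ℝ := fun s => (s ^ 2 + (1 - s) * s * r) / ‖w s‖ ^ 2
  have hg : ContinuousOn g (Set.Icc 0 1) :=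
    ContinuousOn.div (by fun_prop) (by fun_prop) fun s _ => by simpa using hw s
  have hg0 : g 0 = 0 := by simp [g]
  have hg1 : g 1 = 1 := by simp [g, w, hy]
  obtain ⟨s, -, hgs⟩ := intermediate_value_Icc zero_le_one hg (by rwa [hg0, hg1])
  convert inner_map_self_div_norm_sq_mem_numericalRange T (hw s) using 1
  rw [hq, ← hgs]
  simp only [g]
  push_cast
  ring

theorem convex_numericalRange (T : E →ₗ[ℂ] E) : Convex ℝ (numericalRange T) := by
  rintro _ ⟨x, hx, rfl⟩ _ ⟨y, hy, rfl⟩ a b ha hb hab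
  rw [mem_sphere_zero_iff_norm] at hx hy
  dsimp only
  rcases eq_or_ne ⟪x, T x⟫_ℂ ⟪y, T y⟫_ℂ with h | h
  · rw [← h, ← add_smul, hab, one_smul]
    exact ⟨x, by simpa using hx, rfl⟩
  have hxy : ⟪y, T y⟫_ℂ - ⟪x, T x⟫_ℂ ≠ 0 := sub_ne_zero.2 h.symm
  set S := (⟪y, T y⟫_ℂ - ⟪x, T x⟫_ℂ)⁻¹ • (T - ⟪x, T x⟫_ℂ • LinearMap.id)
  have hS : ∀ v : E, ‖v‖ = 1 →
      ⟪v, S v⟫_ℂ = (⟪y, T y⟫_ℂ - ⟪x, T x⟫_ℂ)⁻¹ * (⟪v, T v⟫_ℂ - ⟪x, T x⟫_ℂ) := by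
    intro v hv
    simp [S, inner_self_eq_norm_sq_to_K, hv]
  obtain ⟨v, hv, hvS⟩ := ofReal_mem_numericalRange_of_inner_eq_zero_of_inner_eq_one
    (T := S) (x := x) (y := y) (norm_ne_zero_iff.1 (by simp [hx])) hy (by simp [hS x hx])
    (by simp [hS y hy, hxy]) ⟨hb, by linarith⟩
  refine ⟨v, hv, ?_⟩
  rw [mem_sphere_zero_iff_norm] at hv
  dsimp only at hvS ⊢
  rw [hS v hv] at hvS
  obtain rfl : a = 1 - b := by linarith
  field_simp at hvS
  simp only [Complex.real_smul]
  push_cast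
  linear_combination hvS

theorem isCompact_numericalRange [FiniteDimensional ℂ E] (T : E →ₗ[ℂ] E) :
    IsCompact (numericalRange T) :=
  (isCompact_sphere 0 1).image (by have := T.continuous_of_finiteDimensional; fun_prop)

theorem numericalRange_nonempty [Nontrivial E] (T : E →ₗ[ℂ] E) : (numericalRange T).Nonempty :=
  (NormedSpace.sphere_nonempty.2 zero_le_one).image _

theorem zero_mem_numericalRange_of_forall_norm_le_norm_sub_smul [FiniteDimensional ℂ E]
    [Nontrivial E] (T : E →ₗ[ℂ] E) (h : ∀ w : ℂ, ∃ x, ‖x‖ = 1 ∧ ‖T x‖ ≤ ‖T x - w • x‖) :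
    0 ∈ numericalRange T := by
  refine zero_mem_of_forall_exists_two_inner_le (numericalRange_nonempty T)
    (isCompact_numericalRange T).isComplete (convex_numericalRange T) fun w => ?_
  obtain ⟨x, hx, hTx⟩ := h w
  refine ⟨⟪x, T x⟫_ℂ, ⟨x, by simpa using hx, rfl⟩, ?_⟩
  have hsq := pow_le_pow_left₀ (norm_nonneg _) hTx 2
  rw [norm_sub_sq (𝕜 := ℂ), norm_smul, hx, mul_one, inner_smul_right, ← inner_conj_symm] at hsq
  simp only [Complex.inner, RCLike.re_to_complex, Complex.mul_re, Complex.conj_re,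
    Complex.conj_im] at hsq ⊢
  linarith

end NumericalRange

section OpNorm

variable {d : ℕ}

theorem lamMax_of_isHermitian {M : Matrix (Fin d) (Fin d) ℂ} (hM : M.IsHermitian) :
    lamMax M = ⨆ i, hM.eigenvalues i := by
  rw [lamMax, dif_pos hM]

theorem inner_toEuclideanLin (A : Matrix (Fin d) (Fin d) ℂ) (x : EuclideanSpace ℂ (Fin d)) :
    ⟪x, toEuclideanLin A x⟫_ℂ = star x.ofLp ⬝ᵥ A *ᵥ x.ofLp := by
  rw [EuclideanSpace.inner_eq_star_dotProduct, dotProduct_comm, ofLp_toLpLin, toLin'_apply]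

theorem norm_toEuclideanLin_sq (A : Matrix (Fin d) (Fin d) ℂ) (x : EuclideanSpace ℂ (Fin d)) :
    ‖toEuclideanLin A x‖ ^ 2 = (⟪x, toEuclideanLin (Aᴴ * A) x⟫_ℂ).re := by
  rw [← RCLike.re_to_complex, ← inner_self_eq_norm_sq (𝕜 := ℂ), inner_toEuclideanLin,
    EuclideanSpace.inner_eq_star_dotProduct, ← mulVec_mulVec, dotProduct_mulVec, ← star_mulVec,
    dotProduct_comm, ofLp_toLpLin, toLin'_apply]

open MatrixOrder in
theorem re_inner_toEuclideanLin_le_lamMax {M : Matrix (Fin d) (Fin d) ℂ} (hM : M.IsHermitian)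
    (x : EuclideanSpace ℂ (Fin d)) : (⟪x, toEuclideanLin M x⟫_ℂ).re ≤ lamMax M * ‖x‖ ^ 2 := by
  have hle : M ≤ algebraMap ℝ _ (lamMax M) := by
    refine le_algebraMap_of_spectrum_le ?_ (isHermitian_iff_isSelfAdjoint.1 hM)
    rw [hM.spectrum_real_eq_range_eigenvalues, lamMax_of_isHermitian hM]
    rintro _ ⟨i, rfl⟩
    exact le_ciSup (Set.finite_range _).bddAbove i
  have := (Matrix.le_iff.1 hle).re_dotProduct_nonneg x.ofLp
  rw [sub_mulVec, dotProduct_sub, Algebra.algebraMap_eq_smul_one,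
    smul_mulVec, one_mulVec, dotProduct_smul, dotProduct_comm (star x.ofLp),
    ← EuclideanSpace.inner_eq_star_dotProduct, map_sub, RCLike.smul_re, inner_self_eq_norm_sq,
    sub_nonneg] at this
  rwa [inner_toEuclideanLin]

theorem exists_inner_toEuclideanLin_eq_lamMax [NeZero d] {M : Matrix (Fin d) (Fin d) ℂ}
    (hM : M.IsHermitian) :
    ∃ x : EuclideanSpace ℂ (Fin d), ‖x‖ = 1 ∧ ⟪x, toEuclideanLin M x⟫_ℂ = lamMax M := by
  obtain ⟨i, hi⟩ := Finite.exists_max hM.eigenvalues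
  refine ⟨hM.eigenvectorBasis i, hM.eigenvectorBasis.orthonormal.1 i, ?_⟩
  rw [lamMax_of_isHermitian hM,
    le_antisymm (ciSup_le hi) (le_ciSup (Set.finite_range _).bddAbove i), inner_toEuclideanLin,
    hM.mulVec_eigenvectorBasis, dotProduct_smul, dotProduct_comm,
    ← EuclideanSpace.inner_eq_star_dotProduct,
    inner_self_eq_one_of_norm_eq_one (hM.eigenvectorBasis.orthonormal.1 i), Complex.real_smul,
    mul_one]

theorem opNorm_sq (A : Matrix (Fin d) (Fin d) ℂ) : opNorm A ^ 2 = lamMax (Aᴴ * A) :=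
  Real.sq_sqrt <| by
    rw [lamMax_of_isHermitian (isHermitian_conjTranspose_mul_self A)]
    exact Real.iSup_nonneg (eigenvalues_conjTranspose_mul_self_nonneg A)

theorem norm_toEuclideanLin_le_opNorm (A : Matrix (Fin d) (Fin d) ℂ)
    (x : EuclideanSpace ℂ (Fin d)) :
    ‖toEuclideanLin A x‖ ≤ opNorm A * ‖x‖ := by
  refine (sq_le_sq₀ (norm_nonneg _) (by unfold opNorm; positivity)).1 ?_
  rw [mul_pow, opNorm_sq, norm_toEuclideanLin_sq]
  exact re_inner_toEuclideanLin_le_lamMax (isHermitian_conjTranspose_mul_self A) x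

theorem exists_norm_toEuclideanLin_eq_opNorm [NeZero d] (A : Matrix (Fin d) (Fin d) ℂ) :
    ∃ x : EuclideanSpace ℂ (Fin d), ‖x‖ = 1 ∧ ‖toEuclideanLin A x‖ = opNorm A := by
  obtain ⟨x, hx, hAx⟩ :=
    exists_inner_toEuclideanLin_eq_lamMax (isHermitian_conjTranspose_mul_self A)
  refine ⟨x, hx, ?_⟩
  rw [opNorm, ← Complex.ofReal_re (lamMax _), ← hAx, ← norm_toEuclideanLin_sq,
    Real.sqrt_sq (norm_nonneg _)]

end OpNorm

/-- **Stampfli.** A minimizer `y₀` of `y ↦ ‖X - yI‖` (operator norm) lies in the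
numerical range `W(X) = {⟨ψ, Xψ⟩ : ‖ψ‖ = 1}` of `X`. -/
theorem minimizer_mem_numericalRange (d : ℕ) (hd : 1 ≤ d)
    (X : Matrix (Fin d) (Fin d) ℂ) (y₀ : ℂ)
    (hmin : ∀ y : ℂ, opNorm (X - y₀ • 1) ≤ opNorm (X - y • 1)) :
    ∃ ψ : Fin d → ℂ, (∑ i, ‖ψ i‖ ^ 2 = 1) ∧
      dotProduct (star ψ) (X.mulVec ψ) = y₀ := by
  have : NeZero d := ⟨by omega⟩
  set T := toEuclideanLin (X - y₀ • 1)
  have hT : ∀ w : ℂ, ∃ x, ‖x‖ = 1 ∧ ‖T x‖ ≤ ‖T x - w • x‖ := fun w => by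
    obtain ⟨x, hx, hxw⟩ := exists_norm_toEuclideanLin_eq_opNorm (X - (y₀ + w) • 1)
    refine ⟨x, hx, ?_⟩
    calc ‖T x‖ ≤ opNorm (X - y₀ • 1) := by
          simpa [hx] using norm_toEuclideanLin_le_opNorm (X - y₀ • 1) x
      _ ≤ opNorm (X - (y₀ + w) • 1) := hmin _
      _ = ‖T x - w • x‖ := by
          rw [← hxw, add_smul, ← sub_sub, map_sub, map_smul, toLpLin_one]
          rfl
  obtain ⟨x, hx, hx0⟩ := zero_mem_numericalRange_of_forall_norm_le_norm_sub_smul T hT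
  rw [mem_sphere_zero_iff_norm] at hx
  refine ⟨x.ofLp, by rw [← EuclideanSpace.norm_sq_eq, hx, one_pow], ?_⟩
  simpa only [T, map_sub, map_smul, toLpLin_one, LinearMap.sub_apply, LinearMap.smul_apply,
    LinearMap.id_apply, inner_sub_right, inner_smul_right, inner_self_eq_one_of_norm_eq_one hx,
    mul_one, sub_eq_zero, inner_toEuclideanLin] using hx0
end

section
/- Let X be a d × d complex matrix. Then the numerical radius w(X) = max over unit vectors ψ ∈ ℂ^d of |⟨ψ, X*ψ⟩| satisfies w(X) ≤ sqrt( λ_max( (Xᴴ*X + X*Xᴴ)/2 ) ); equivalently, the numerical radius is at most the operator norm of the Cartesian modulus |X|_C = ((Xᴴ*X + X*Xᴴ)/2)^(1/2). -/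
open Matrix BigOperators

/-!
Cauchy–Schwarz bounds `|⟨ψ, Xψ⟩|` both by `‖Xψ‖` and, writing `⟨ψ, Xψ⟩ = ⟨Xᴴψ, ψ⟩`, by `‖Xᴴψ‖`.
Averaging the squares gives `|⟨ψ, Xψ⟩|² ≤ (‖Xψ‖² + ‖Xᴴψ‖²) / 2 = ⟨ψ, ((XᴴX + XXᴴ)/2) ψ⟩`, and the
quadratic form of a Hermitian matrix on a unit vector is at most its largest eigenvalue.
-/

open scoped MatrixOrder ComplexOrder

namespace Matrix

variable {𝕜 : Type*} [RCLike 𝕜] {n : Type*} [Fintype n]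

theorem re_star_dotProduct_self (v : n → 𝕜) : RCLike.re (star v ⬝ᵥ v) = ∑ i, ‖v i‖ ^ 2 := by
  simp [dotProduct, RCLike.star_def, RCLike.conj_mul]

theorem norm_star_dotProduct_sq_le (u v : n → 𝕜) :
    ‖star u ⬝ᵥ v‖ ^ 2 ≤ RCLike.re (star u ⬝ᵥ u) * RCLike.re (star v ⬝ᵥ v) := by
  have h := inner_mul_inner_self_le (𝕜 := 𝕜) (WithLp.toLp 2 u) (WithLp.toLp 2 v)
  simp only [EuclideanSpace.inner_toLp_toLp, dotProduct_comm _ (star _)] at h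
  rwa [star_dotProduct v u, norm_star, ← sq] at h

theorem star_dotProduct_conjTranspose_mul_mulVec {m : Type*} [Fintype m] (A : Matrix m n 𝕜)
    (B : Matrix m n 𝕜) (x y : n → 𝕜) :
    star x ⬝ᵥ (Aᴴ * B) *ᵥ y = star (A *ᵥ x) ⬝ᵥ B *ᵥ y := by
  rw [← mulVec_mulVec, dotProduct_mulVec, star_mulVec]

theorem IsHermitian.re_star_dotProduct_mulVec_le [DecidableEq n] {A : Matrix n n 𝕜}
    (hA : A.IsHermitian) {r : ℝ} (hr : ∀ i, hA.eigenvalues i ≤ r) (x : n → 𝕜) :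
    RCLike.re (star x ⬝ᵥ A *ᵥ x) ≤ r * RCLike.re (star x ⬝ᵥ x) := by
  have hle : A ≤ algebraMap ℝ _ r := by
    refine le_algebraMap_of_spectrum_le ?_ hA.isSelfAdjoint
    rw [hA.spectrum_real_eq_range_eigenvalues]
    rintro _ ⟨i, rfl⟩
    exact hr i
  have hnonneg := (le_iff.mp hle).re_dotProduct_nonneg x
  rw [sub_mulVec, dotProduct_sub, map_sub, Algebra.algebraMap_eq_smul_one, smul_mulVec,
    one_mulVec, dotProduct_smul, RCLike.smul_re] at hnonneg
  linarith

theorem norm_star_dotProduct_mulVec_sq_le (X : Matrix n n 𝕜) (x : n → 𝕜) :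
    ‖star x ⬝ᵥ X *ᵥ x‖ ^ 2
      ≤ RCLike.re (star x ⬝ᵥ ((2 : 𝕜)⁻¹ • (Xᴴ * X + X * Xᴴ)) *ᵥ x) * RCLike.re (star x ⬝ᵥ x) := by
  have hadj : star (Xᴴ *ᵥ x) ⬝ᵥ x = star x ⬝ᵥ X *ᵥ x := by
    rw [star_mulVec, conjTranspose_conjTranspose, dotProduct_mulVec]
  have hXX : star x ⬝ᵥ (X * Xᴴ) *ᵥ x = star (Xᴴ *ᵥ x) ⬝ᵥ Xᴴ *ᵥ x := by
    simpa using star_dotProduct_conjTranspose_mul_mulVec Xᴴ Xᴴ x x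
  have hX := norm_star_dotProduct_sq_le x (X *ᵥ x)
  have hXH := norm_star_dotProduct_sq_le (Xᴴ *ᵥ x) x
  rw [hadj] at hXH
  rw [smul_mulVec, add_mulVec, dotProduct_smul, dotProduct_add, hXX,
    star_dotProduct_conjTranspose_mul_mulVec, show (2 : 𝕜)⁻¹ = ((2⁻¹ : ℝ) : 𝕜) by push_cast; rfl,
    smul_eq_mul, RCLike.re_ofReal_mul, map_add]
  linarith

end Matrix

/-- The numerical radius of `X` is at most the operator norm of the Cartesian
modulus of `X`: for every unit vector `ψ`,
`|⟨ψ, Xψ⟩| ≤ sqrt(λ_max((XᴴX + XXᴴ)/2))`. -/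
theorem numerical_radius_le_cartesian_modulus_norm (d : ℕ)
    (X : Matrix (Fin d) (Fin d) ℂ) (ψ : Fin d → ℂ)
    (hψ : ∑ i, ‖ψ i‖ ^ 2 = 1) :
    ‖dotProduct (star ψ) (X.mulVec ψ)‖
      ≤ Real.sqrt (lamMax ((2 : ℂ)⁻¹ • (Xᴴ * X + X * Xᴴ))) := by
  set M : Matrix (Fin d) (Fin d) ℂ := (2 : ℂ)⁻¹ • (Xᴴ * X + X * Xᴴ)
  have hM : M.IsHermitian :=
    ((isHermitian_conjTranspose_mul_self X).add (isHermitian_mul_conjTranspose_self X)).smul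
      (by simp [IsSelfAdjoint])
  have hψ' : RCLike.re (star ψ ⬝ᵥ ψ) = 1 := (re_star_dotProduct_self ψ).trans hψ
  have hquad : ‖star ψ ⬝ᵥ X *ᵥ ψ‖ ^ 2 ≤ RCLike.re (star ψ ⬝ᵥ M *ᵥ ψ) := by
    simpa only [hψ', mul_one] using norm_star_dotProduct_mulVec_sq_le X ψ
  have hray : RCLike.re (star ψ ⬝ᵥ M *ᵥ ψ) ≤ lamMax M := by
    rw [lamMax, dif_pos hM]
    simpa only [hψ', mul_one] using hM.re_star_dotProduct_mulVec_le
      (fun i ↦ le_ciSup (Set.finite_range _).bddAbove i) ψ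
  exact Real.le_sqrt_of_sq_le (hquad.trans hray)
end

section
/- Let A and B be Hermitian d × d complex matrices and let ρ be a d × d density matrix. Then sqrt( (Tr(ρ*A))² + (Tr(ρ*B))² ) ≤ Tr( ρ * (A² + B²)^(1/2) ), where (A² + B²)^(1/2) is the positive semidefinite square root of A² + B², and Tr(ρ*A), Tr(ρ*B) are real. -/
/-!
Put `a = Tr(ρA)`, `b = Tr(ρB)`, `r = √(a² + b²)` and `S = (A² + B²)^(1/2)`. The Hermitian matrix
`M = aA + bB` satisfies `M² ≤ M² + (bA - aB)² = (a² + b²)(A² + B²) = (rS)²`, and since the square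
root is operator monotone, `M ≤ |M| = √(M²) ≤ √((rS)²) = rS`. Applying the positive functional
`X ↦ Tr(ρX)` gives `r² = a·a + b·b ≤ r·Tr(ρS)`. The argument works for every positive linear
functional on a C⋆-algebra.
-/

open Matrix BigOperators
open scoped ComplexOrder

/-- For Hermitian `A` and `B`, the matrix `A² + B²` is positive semidefinite. -/
theorem sq_add_sq_posSemidef {d : ℕ} {A B : Matrix (Fin d) (Fin d) ℂ}
    (hA : A.IsHermitian) (hB : B.IsHermitian) : (A * A + B * B).PosSemidef := by
  have h1 := Matrix.posSemidef_conjTranspose_mul_self A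
  have h2 := Matrix.posSemidef_conjTranspose_mul_self B
  rw [hA.eq] at h1
  rw [hB.eq] at h2
  exact h1.add h2

/-- The positive semidefinite square root of a positive semidefinite matrix, as defined in
the older Mathlib (`Matrix.PosSemidef.sqrt`, since removed). -/
noncomputable def Matrix.PosSemidef.sqrt {n : Type*} [Fintype n] [DecidableEq n]
    {M : Matrix n n ℂ} (hM : M.PosSemidef) : Matrix n n ℂ :=
  hM.1.eigenvectorUnitary.1 * diagonal ((↑) ∘ (√·) ∘ hM.1.eigenvalues) *
    (star hM.1.eigenvectorUnitary : Matrix n n ℂ)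

lemma smul_add_smul_mul_self_add {R : Type*} [Ring R] [Algebra ℝ R] {a b : R} (x y : ℝ) :
    (x • a + y • b) * (x • a + y • b) + (y • a - x • b) * (y • a - x • b) =
      (x ^ 2 + y ^ 2) • (a * a + b * b) := by
  simp only [add_mul, mul_add, sub_mul, mul_sub, smul_mul_assoc, mul_smul_comm]
  module

section CStarAlgebra

variable {A : Type*} [CStarAlgebra A] [PartialOrder A] [StarOrderedRing A]

lemma IsSelfAdjoint.le_cfcAbs {a : A} (ha : IsSelfAdjoint a) : a ≤ CFC.abs a := by
  rw [← sub_nonneg, CFC.abs_sub_self a ha]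
  exact nsmul_nonneg (CFC.negPart_nonneg a) 2

lemma IsSelfAdjoint.le_of_mul_self_le_mul_self {a b : A} (ha : IsSelfAdjoint a) (hb : 0 ≤ b)
    (h : a * a ≤ b * b) : a ≤ b :=
  calc a ≤ CFC.abs a := ha.le_cfcAbs
    _ = CFC.sqrt (a * a) := by rw [CFC.abs, ha.star_eq]
    _ ≤ CFC.sqrt (b * b) := CFC.sqrt_le_sqrt _ _ h
    _ = b := CFC.sqrt_mul_self b hb

theorem PositiveLinearMap.sqrt_sq_add_sq_le (f : A →ₚ[ℝ] ℝ) {a b : A} (ha : IsSelfAdjoint a)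
    (hb : IsSelfAdjoint b) : √(f a ^ 2 + f b ^ 2) ≤ f (CFC.sqrt (a * a + b * b)) := by
  set r := √(f a ^ 2 + f b ^ 2)
  set s := CFC.sqrt (a * a + b * b)
  have hr : r * r = f a ^ 2 + f b ^ 2 := Real.mul_self_sqrt (by positivity)
  have hs : s * s = a * a + b * b :=
    CFC.sqrt_mul_sqrt_self _ (add_nonneg ha.mul_self_nonneg hb.mul_self_nonneg)
  have hm : IsSelfAdjoint (f a • a + f b • b) :=
    ((IsSelfAdjoint.all _).smul ha).add ((IsSelfAdjoint.all _).smul hb)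
  have hn : IsSelfAdjoint (f b • a - f a • b) :=
    ((IsSelfAdjoint.all _).smul ha).sub ((IsSelfAdjoint.all _).smul hb)
  have hle : f a • a + f b • b ≤ r • s := by
    refine hm.le_of_mul_self_le_mul_self
      (smul_nonneg (Real.sqrt_nonneg _) (CFC.sqrt_nonneg _)) ?_
    rw [smul_mul_smul_comm, hr, hs, ← smul_add_smul_mul_self_add]
    exact le_add_of_nonneg_right hn.mul_self_nonneg
  have hfs : 0 ≤ f s := f.map_nonneg (CFC.sqrt_nonneg _)
  have hfle := OrderHomClass.mono f hle
  simp only [map_add, map_smul, smul_eq_mul] at hfle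
  nlinarith

end CStarAlgebra

namespace Matrix

open scoped MatrixOrder Matrix.Norms.L2Operator

variable {n : Type*} [Fintype n]

lemma PosSemidef.sqrt_eq_cfcSqrt [DecidableEq n] {M : Matrix n n ℂ} (hM : M.PosSemidef) :
    hM.sqrt = CFC.sqrt M := by
  rw [CFC.sqrt_eq_cfc, cfc_nnreal_eq_real _ M, hM.1.cfc_eq]
  simp only [IsHermitian.cfc, PosSemidef.sqrt, Unitary.conjStarAlgAut_apply]
  congr 3 with i
  simp [hM.eigenvalues_nonneg i]

lemma PosSemidef.trace_mul_nonneg {𝕜 : Type*} [RCLike 𝕜] {ρ P : Matrix n n 𝕜}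
    (hρ : ρ.PosSemidef) (hP : P.PosSemidef) : 0 ≤ (ρ * P).trace := by
  classical
  obtain ⟨B, rfl⟩ := CStarAlgebra.nonneg_iff_eq_star_mul_self.mp hP.nonneg
  rw [← mul_assoc, trace_mul_cycle]
  exact (hρ.mul_mul_conjTranspose_same B).trace_nonneg

lemma IsHermitian.im_trace_mul {ρ X : Matrix n n ℂ} (hρ : ρ.IsHermitian) (hX : X.IsHermitian) :
    (ρ * X).trace.im = 0 := by
  have h : star (ρ * X).trace = (ρ * X).trace := by
    rw [← trace_conjTranspose, conjTranspose_mul, hρ.eq, hX.eq, trace_mul_comm]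
  exact Complex.conj_eq_iff_im.mp h

noncomputable def PosSemidef.expectation {ρ : Matrix n n ℂ} (hρ : ρ.PosSemidef) :
    Matrix n n ℂ →ₚ[ℝ] ℝ :=
  .mk₀ { toFun X := (ρ * X).trace.re
         map_add' X Y := by simp [mul_add]
         map_smul' c X := by simp }
    fun _ hX ↦ (Complex.le_def.mp (hρ.trace_mul_nonneg hX.posSemidef)).1

end Matrix

theorem trace_sqrt_inequality_general (d : ℕ) (A B ρ : Matrix (Fin d) (Fin d) ℂ)
    (hA : A.IsHermitian) (hB : B.IsHermitian)
    (hρ : ρ.PosSemidef) :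
    (ρ * A).trace.im = 0 ∧ (ρ * B).trace.im = 0 ∧
      Real.sqrt ((ρ * A).trace.re ^ 2 + (ρ * B).trace.re ^ 2)
        ≤ (ρ * (sq_add_sq_posSemidef hA hB).sqrt).trace.re := by
  refine ⟨hρ.1.im_trace_mul hA, hρ.1.im_trace_mul hB, ?_⟩
  open scoped MatrixOrder Matrix.Norms.L2Operator in
  exact (sq_add_sq_posSemidef hA hB).sqrt_eq_cfcSqrt ▸ hρ.expectation.sqrt_sq_add_sq_le hA hB

/-- For Hermitian `A`, `B` and a density matrix `ρ`, the traces `Tr(ρA)` and `Tr(ρB)`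
are real and `sqrt((Tr ρA)² + (Tr ρB)²) ≤ Tr(ρ (A² + B²)^(1/2))`, where
`(A² + B²)^(1/2)` is the positive semidefinite square root. -/
theorem trace_sqrt_inequality (d : ℕ) (A B ρ : Matrix (Fin d) (Fin d) ℂ)
    (hA : A.IsHermitian) (hB : B.IsHermitian)
    (hρ : ρ.PosSemidef) (hρtr : ρ.trace = 1) :
    (ρ * A).trace.im = 0 ∧ (ρ * B).trace.im = 0 ∧
      Real.sqrt ((ρ * A).trace.re ^ 2 + (ρ * B).trace.re ^ 2)
        ≤ (ρ * (sq_add_sq_posSemidef hA hB).sqrt).trace.re :=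
  trace_sqrt_inequality_general d A B ρ hA hB hρ
end
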